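/- arXiv:2007.08369 — 2 statements merged into one kernel-verified Lean document; each statement's English description precedes it below -/
import Mathlib

section
/- Let W be a standard Brownian motion. Then for every M > 0, with probability one, sup_{1 ≤ s ≤ t < ∞} t^{-3/2} |t W(s) - s W(t)| ≥ M. Consequently this supremum is almost surely infinite. -/
/-!
At `s = 2^k`, `t = 2^(k+1)` the expression `t^(-3/2) |t W(s) - s W(t)|` equals `|Z k| / 2`, where
`Z k = (W(2^k) - (W(2^(k+1)) - W(2^k))) / √(2^(k+1))`. Each `Z k` is standard Gaussian, and for
`j < k` the pair `(Z j, Z k)` is jointly Gaussian and uncorrelated, hence independent. The strong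
law of large numbers for pairwise independent identically distributed variables, applied to the
indicators of `{2M ≤ |Z k|}`, shows that almost surely some `|Z k|` reaches `2M`.
-/

open MeasureTheory ProbabilityTheory Filter

noncomputable section

/-- A standard Brownian motion: a centered Gaussian process indexed by nonnegative
times with covariance `min s t` and almost surely continuous sample paths on `[0,∞)`. -/
def IsStdBM {Ω : Type*} [MeasureSpace Ω] (W : ℝ → Ω → ℝ) : Prop :=
  (∀ t : ℝ, Measurable (W t)) ∧
  (∀ᵐ ω ∂(volume : Measure Ω), ContinuousOn (fun t => W t ω) (Set.Ici 0)) ∧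
  ∀ (n : ℕ) (c t : Fin n → ℝ), (∀ i, 0 ≤ t i) →
    Measure.map (fun ω => ∑ i, c i * W (t i) ω) volume =
      gaussianReal 0 (Real.toNNReal (∑ i, ∑ j, c i * c j * min (t i) (t j)))

namespace ProbabilityTheory

open Function

variable {Ω : Type*} {mΩ : MeasurableSpace Ω} {P : Measure Ω}

lemma indepFun_of_map_linear_eq_gaussianReal [IsProbabilityMeasure P] {X Y : Ω → ℝ}
    (hX : AEMeasurable X P) (hY : AEMeasurable Y P)
    (h : ∀ a b : ℝ,
      P.map (fun ω ↦ a * X ω + b * Y ω) = gaussianReal 0 (a ^ 2 + b ^ 2).toNNReal) :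
    IndepFun X Y P := by
  have hXY : HasGaussianLaw (fun ω ↦ (X ω, Y ω)) P := by
    refine ⟨isGaussian_of_map_eq_gaussianReal fun L ↦
      ⟨0, (L (1, 0) ^ 2 + L (0, 1) ^ 2).toNNReal, ?_⟩⟩
    have hL : ∀ x y : ℝ, L (x, y) = L (1, 0) * x + L (0, 1) * y := fun x y ↦ by
      have : ((x, y) : ℝ × ℝ) = x • (1, 0) + y • (0, 1) := by simp
      rw [this, map_add, map_smul, map_smul, smul_eq_mul, smul_eq_mul, mul_comm x, mul_comm y]
    rw [AEMeasurable.map_map_of_aemeasurable L.continuous.aemeasurable (hX.prodMk hY),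
      show L ∘ (fun ω ↦ (X ω, Y ω)) = fun ω ↦ L (1, 0) * X ω + L (0, 1) * Y ω from
      funext fun ω ↦ hL _ _]
    exact h _ _
  have hvar (a b : ℝ) : Var[fun ω ↦ a * X ω + b * Y ω; P] = a ^ 2 + b ^ 2 := by
    rw [HasLaw.variance_eq ⟨by fun_prop, h a b⟩, variance_id_gaussianReal,
      Real.coe_toNNReal _ (by positivity)]
  have hvarAdd := hvar 1 1
  have hvarX := hvar 1 0
  have hvarY := hvar 0 1
  simp only [one_mul, zero_mul, add_zero, zero_add] at hvarAdd hvarX hvarY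
  refine hXY.indepFun_of_covariance_eq_zero ?_
  rw [variance_fun_add hXY.fst.memLp_two hXY.snd.memLp_two, hvarX, hvarY] at hvarAdd
  linarith

lemma ae_exists_mem_of_pairwise_indepFun {α : Type*} {mα : MeasurableSpace α}
    [IsProbabilityMeasure P] {X : ℕ → Ω → α} (hindep : Pairwise ((· ⟂ᵢ[P] ·) on X))
    (hident : ∀ n, IdentDistrib (X n) (X 0) P P) {S : Set α} (hS : MeasurableSet S)
    (hpos : P.map (X 0) S ≠ 0) :
    ∀ᵐ ω ∂P, ∃ n, X n ω ∈ S := by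
  set f : α → ℝ := S.indicator 1
  have hf : Measurable f := measurable_const.indicator hS
  have hmean : P[f ∘ X 0] = (P.map (X 0)).real S := by
    rw [← integral_indicator_one hS, integral_map (hident 0).aemeasurable_fst
      hf.aestronglyMeasurable]
    rfl
  have hint : Integrable (f ∘ X 0) P :=
    ((integrable_const 1).indicator hS).comp_aemeasurable (hident 0).aemeasurable_fst
  filter_upwards [strong_law_ae_real (fun n ↦ f ∘ X n) hint
    (fun i j hij ↦ (hindep hij).comp hf hf) (fun n ↦ (hident n).comp hf)] with ω hω
  by_contra! hnone
  have hzero : ∀ n, (f ∘ X n) ω = 0 := fun n ↦ by simp [f, hnone n]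
  simp only [hzero, Finset.sum_const_zero, zero_div] at hω
  rw [hmean] at hω
  exact hpos ((measureReal_eq_zero_iff).mp (tendsto_nhds_unique hω tendsto_const_nhds))

end ProbabilityTheory

section

open Real Function

variable {Ω : Type*} [MeasureSpace Ω] {W : ℝ → Ω → ℝ}

def doublingDefect (W : ℝ → Ω → ℝ) (s : ℝ) (ω : Ω) : ℝ :=
  (W s ω - (W (2 * s) ω - W s ω)) / √(2 * s)

namespace IsStdBM

lemma measurable_doublingDefect (hW : IsStdBM W) (s : ℝ) : Measurable (doublingDefect W s) := by
  have := hW.1 s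
  have := hW.1 (2 * s)
  unfold doublingDefect
  fun_prop

lemma map_linear_doublingDefect (hW : IsStdBM W) {s s' : ℝ} (hs : 0 < s) (hss' : 2 * s ≤ s')
    (a b : ℝ) :
    volume.map (fun ω ↦ a * doublingDefect W s ω + b * doublingDefect W s' ω) =
      gaussianReal 0 (a ^ 2 + b ^ 2).toNNReal := by
  have hs' : 0 < s' := by linarith
  set α := a / √(2 * s)
  set β := b / √(2 * s')
  have hlaw := hW.2.2 4 ![2 * α, -α, 2 * β, -β] ![s, 2 * s, s', 2 * s']
    (by intro i; fin_cases i <;> simp <;> linarith)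
  have hfun :
      (fun ω ↦ ∑ i : Fin 4, ![2 * α, -α, 2 * β, -β] i * W (![s, 2 * s, s', 2 * s'] i) ω) =
        fun ω ↦ a * doublingDefect W s ω + b * doublingDefect W s' ω := by
    ext ω
    simp only [Fin.sum_univ_four, doublingDefect, α, β, Matrix.cons_val_zero, Matrix.cons_val_one,
      Matrix.cons_val_two, Matrix.cons_val_three, Matrix.head_cons, Matrix.tail_cons]
    ring
  rw [← hfun, hlaw]
  congr 2
  simp only [Fin.sum_univ_four, Matrix.cons_val_zero, Matrix.cons_val_one, Matrix.cons_val_two,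
    Matrix.cons_val_three, Matrix.head_cons, Matrix.tail_cons]
  -- Since `s ≤ 2s ≤ s' ≤ 2s'`, the cross terms cancel: `4s - 2s - 2 * 2s + 2s = 0`.
  have h₁ : s ≤ 2 * s := by linarith
  have h₂ : s ≤ s' := by linarith
  have h₃ : s ≤ 2 * s' := by linarith
  have h₄ : 2 * s ≤ 2 * s' := by linarith
  have h₅ : s' ≤ 2 * s' := by linarith
  simp only [min_self, min_eq_left, min_eq_right, h₁, h₂, h₃, h₄, h₅, hss']
  have hα : α ^ 2 * (2 * s) = a ^ 2 := by
    rw [div_pow, sq_sqrt (by linarith), div_mul_cancel₀ _ (by positivity)]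
  have hβ : β ^ 2 * (2 * s') = b ^ 2 := by
    rw [div_pow, sq_sqrt (by linarith), div_mul_cancel₀ _ (by positivity)]
  linear_combination hα + hβ

lemma map_doublingDefect (hW : IsStdBM W) {s : ℝ} (hs : 0 < s) :
    volume.map (doublingDefect W s) = gaussianReal 0 1 := by
  simpa using hW.map_linear_doublingDefect hs le_rfl 1 0

lemma indepFun_doublingDefect [IsProbabilityMeasure (volume : Measure Ω)] (hW : IsStdBM W)
    {s s' : ℝ} (hs : 0 < s) (hss' : 2 * s ≤ s') :
    IndepFun (doublingDefect W s) (doublingDefect W s') :=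
  indepFun_of_map_linear_eq_gaussianReal (hW.measurable_doublingDefect s).aemeasurable
    (hW.measurable_doublingDefect s').aemeasurable (hW.map_linear_doublingDefect hs hss')

lemma ae_exists_le_abs_doublingDefect [IsProbabilityMeasure (volume : Measure Ω)]
    (hW : IsStdBM W) (c : ℝ) : ∀ᵐ ω, ∃ k : ℕ, c ≤ |doublingDefect W (2 ^ k) ω| := by
  have hindep : Pairwise ((· ⟂ᵢ[volume] ·) on fun k : ℕ ↦ doublingDefect W (2 ^ k)) := by
    have hlt {i j : ℕ} (hij : i < j) :
        doublingDefect W (2 ^ i) ⟂ᵢ[volume] doublingDefect W (2 ^ j) :=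
      hW.indepFun_doublingDefect (by positivity)
        (by rw [← pow_succ']; exact pow_le_pow_right₀ one_le_two hij)
    intro i j hij
    rcases hij.lt_or_gt with h | h
    exacts [hlt h, (hlt h).symm]
  have hident : ∀ k : ℕ, IdentDistrib (doublingDefect W (2 ^ k)) (doublingDefect W (2 ^ 0))
      volume volume := fun k ↦
    ⟨(hW.measurable_doublingDefect _).aemeasurable, (hW.measurable_doublingDefect _).aemeasurable,
      by rw [hW.map_doublingDefect (by positivity), hW.map_doublingDefect (by positivity)]⟩
  refine ae_exists_mem_of_pairwise_indepFun hindep hident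
    (measurableSet_le measurable_const continuous_abs.measurable) ?_
  rw [hW.map_doublingDefect (by positivity)]
  intro h
  have hIci : volume (Set.Ici c) = 0 := gaussianReal_absolutelyContinuous' 0 one_ne_zero
    (measure_mono_null (fun x hx ↦ (Set.mem_Ici.mp hx).trans (le_abs_self x)) h)
  simp at hIci

end IsStdBM

lemma rpow_neg_three_halves_mul_abs_eq (w : ℝ → ℝ) {s : ℝ} (hs : 0 < s) :
    (2 * s) ^ (-(3 : ℝ) / 2) * |2 * s * w s - s * w (2 * s)| =
      |(w s - (w (2 * s) - w s)) / √(2 * s)| / 2 := by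
  have h2s : 0 < 2 * s := by positivity
  have hrpow : (2 * s) ^ (-(3 : ℝ) / 2) = (√(2 * s))⁻¹ * (2 * s)⁻¹ := by
    rw [show -(3 : ℝ) / 2 = -(1 / 2) + -1 by norm_num, rpow_add h2s, rpow_neg_one,
      rpow_neg h2s.le, ← sqrt_eq_rpow]
  have hfactor : 2 * s * w s - s * w (2 * s) = s * (w s - (w (2 * s) - w s)) := by ring
  rw [hrpow, hfactor, abs_mul, abs_div, abs_of_pos hs, abs_of_pos (sqrt_pos.mpr h2s)]
  field_simp

end

theorem stmt5 {Ω : Type*} [MeasureSpace Ω] [IsProbabilityMeasure (volume : Measure Ω)]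
    (W : ℝ → Ω → ℝ) (hW : IsStdBM W) :
    (∀ M : ℝ, 0 < M → ∀ᵐ ω ∂(volume : Measure Ω),
      ENNReal.ofReal M ≤
        ⨆ (s : ℝ) (t : ℝ) (_ : 1 ≤ s) (_ : s ≤ t),
          ENNReal.ofReal (t ^ (-(3 : ℝ) / 2) * |t * W s ω - s * W t ω|)) ∧
    ∀ᵐ ω ∂(volume : Measure Ω),
      (⨆ (s : ℝ) (t : ℝ) (_ : 1 ≤ s) (_ : s ≤ t),
          ENNReal.ofReal (t ^ (-(3 : ℝ) / 2) * |t * W s ω - s * W t ω|)) = ⊤ := by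
  set S : Ω → ENNReal := fun ω ↦ ⨆ (s : ℝ) (t : ℝ) (_ : 1 ≤ s) (_ : s ≤ t),
    ENNReal.ofReal (t ^ (-(3 : ℝ) / 2) * |t * W s ω - s * W t ω|)
  have hdyadic (ω : Ω) (k : ℕ) :
      ENNReal.ofReal (|doublingDefect W (2 ^ k) ω| / 2) ≤ S ω := by
    refine le_iSup_of_le (2 ^ k) <| le_iSup_of_le (2 * 2 ^ k) <|
      le_iSup_of_le (one_le_pow₀ one_le_two) <|
      le_iSup_of_le (le_mul_of_one_le_left (by positivity) one_le_two) ?_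
    rw [rpow_neg_three_halves_mul_abs_eq (W · ω) (by positivity), doublingDefect]
  have hlarge (M : ℝ) : ∀ᵐ ω, ENNReal.ofReal M ≤ S ω := by
    filter_upwards [hW.ae_exists_le_abs_doublingDefect (2 * M)] with ω ⟨k, hk⟩
    exact (ENNReal.ofReal_le_ofReal (by linarith)).trans (hdyadic ω k)
  refine ⟨fun M _ ↦ hlarge M, ?_⟩
  filter_upwards [ae_all_iff.2 fun n : ℕ ↦ hlarge n] with ω hω
  refine ENNReal.eq_top_of_forall_nnreal_le fun r ↦ ?_
  obtain ⟨n, hn⟩ := exists_nat_ge (r : ℝ)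
  calc (r : ENNReal) = ENNReal.ofReal r := (ENNReal.ofReal_coe_nnreal).symm
    _ ≤ ENNReal.ofReal n := ENNReal.ofReal_le_ofReal hn
    _ ≤ S ω := hω n
end
end

section
/- Let W_1, W_2 be independent standard Brownian motions and η > 0. The random function R_η(s,t) = t^{-3/2-η} |(t-s) W_2(1) + t W_1(s-1) - s W_1(t-1)|, defined on A = {(s,t) ∈ [1,∞)² : s ≤ t}, is almost surely bounded and uniformly continuous on A. -/
open MeasureTheory ProbabilityTheory Filter

noncomputable section

/-!
Almost surely a Brownian path satisfies `|W u| ≤ C (1 + u) ^ (1/2 + η/2)`. On `[n + 1, n + 2]`,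
Markov's inequality for a Gaussian moment of order `2p` bounds the probability that
`|W (n + 1) - W 0|`, or some dyadic increment of level `m`, exceeds
`(9/10)^m (n + 1)^(1/2 + η/2)` by a term summable in `n`. By Borel–Cantelli only finitely many
intervals are bad, and on a good one chaining controls the whole path.
With `f = W₁ · ω` and `b = W₂ 1 ω` this growth bound gives `R_η(s, t) ≤ K t^(-η/2)` on `A`,
hence boundedness and decay at infinity; a continuous function on a closed set that tends to `0`
at infinity is uniformly continuous.
-/

open Set Topology
open scoped ENNReal NNReal

def stdGaussianMoment (p : ℕ) : ℝ≥0∞ := ∫⁻ x, ENNReal.ofReal (x ^ (2 * p)) ∂gaussianReal 0 1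

lemma stdGaussianMoment_ne_top (p : ℕ) : stdGaussianMoment p ≠ ∞ := by
  have h := (memLp_id_gaussianReal' (μ := 0) (v := 1) (2 * p : ℕ)
    (ENNReal.natCast_ne_top _)).integrable_norm_pow'
  simp only [id, Real.norm_eq_abs, (even_two_mul p).pow_abs] at h
  exact h.lintegral_lt_top.ne

lemma lintegral_pow_gaussianReal (p : ℕ) (v : ℝ≥0) :
    ∫⁻ x, ENNReal.ofReal (x ^ (2 * p)) ∂gaussianReal 0 v
      = ENNReal.ofReal ((v : ℝ) ^ p) * stdGaussianMoment p := by
  have hmap : (gaussianReal 0 1).map (fun x => √v * x) = gaussianReal 0 v := by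
    rw [gaussianReal_map_const_mul, mul_zero, mul_one]
    congr 1
    ext
    simp
  rw [← hmap, lintegral_map (by fun_prop) (by fun_prop), stdGaussianMoment,
    ← lintegral_const_mul _ (by fun_prop)]
  congr 1 with x
  rw [← ENNReal.ofReal_mul (by positivity), mul_pow, pow_mul, Real.sq_sqrt v.coe_nonneg, pow_mul]

lemma gaussianReal_abs_ge_le (p : ℕ) (v : ℝ≥0) {a : ℝ} (ha : 0 < a) :
    gaussianReal 0 v {x | a ≤ |x|}
      ≤ stdGaussianMoment p * ENNReal.ofReal ((v : ℝ) ^ p / a ^ (2 * p)) := by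
  have hpow : {x : ℝ | a ≤ |x|}
      ⊆ {x | ENNReal.ofReal (a ^ (2 * p)) ≤ ENNReal.ofReal (x ^ (2 * p))} :=
    fun x hx => ENNReal.ofReal_le_ofReal <|
      (even_two_mul p).pow_abs x ▸ pow_le_pow_left₀ ha.le hx _
  calc gaussianReal 0 v {x | a ≤ |x|}
      ≤ (∫⁻ x, ENNReal.ofReal (x ^ (2 * p)) ∂gaussianReal 0 v) / ENNReal.ofReal (a ^ (2 * p)) :=
        (measure_mono hpow).trans <| meas_ge_le_lintegral_div (by fun_prop)
          (by simp; positivity) ENNReal.ofReal_ne_top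
    _ = stdGaussianMoment p * ENNReal.ofReal ((v : ℝ) ^ p / a ^ (2 * p)) := by
        rw [lintegral_pow_gaussianReal, ENNReal.ofReal_div_of_pos (by positivity), mul_comm,
          mul_div_assoc]

lemma ProbabilityTheory.HasLaw.meas_abs_ge_le_of_gaussianReal {Ω : Type*} [MeasurableSpace Ω]
    {P : Measure Ω} {X : Ω → ℝ} {v : ℝ≥0} (hX : HasLaw X (gaussianReal 0 v) P) (p : ℕ) {a : ℝ}
    (ha : 0 < a) :
    P {ω | a ≤ |X ω|} ≤ stdGaussianMoment p * ENNReal.ofReal ((v : ℝ) ^ p / a ^ (2 * p)) := by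
  rw [hX.measure_eq (p := fun x => a ≤ |x|) (measurableSet_le measurable_const measurable_abs)]
  exact gaussianReal_abs_ge_le p v ha

section Chaining

variable {f : ℝ → ℝ} {a b r : ℝ}

lemma abs_sub_le_geom_sum_of_dyadic (hb : 0 ≤ b) (hr : 0 ≤ r)
    (h : ∀ m k : ℕ, k < 2 ^ m → |f (a + (k + 1) / 2 ^ m) - f (a + k / 2 ^ m)| ≤ r ^ m * b)
    (m k : ℕ) (hk : k ≤ 2 ^ m) :
    |f (a + k / 2 ^ m) - f a| ≤ (∑ j ∈ Finset.range (m + 1), r ^ j) * b := by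
  -- `a + k / 2 ^ (m + 1)` is `a + ⌊k / 2⌋ / 2 ^ m` or one level-`(m + 1)` increment away from it.
  induction m generalizing k with
  | zero =>
    interval_cases k
    · simpa using hb
    · simpa using h 0 0 one_pos
  | succ m ih =>
    have hsum_mono : (∑ j ∈ Finset.range (m + 1), r ^ j) * b
        ≤ (∑ j ∈ Finset.range (m + 2), r ^ j) * b := by
      rw [Finset.sum_range_succ _ (m + 1)]
      nlinarith [pow_nonneg hr (m + 1)]
    have hhalf (j : ℕ) : a + 2 * (j : ℝ) / 2 ^ (m + 1) = a + j / 2 ^ m := by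
      field_simp; ring
    obtain ⟨j, rfl | rfl⟩ := Nat.even_or_odd' k
    · push_cast
      rw [hhalf]
      exact (ih j (by omega)).trans hsum_mono
    · have hstep := h (m + 1) (2 * j) (by omega)
      push_cast at hstep ⊢
      rw [hhalf] at hstep
      calc |f (a + (2 * j + 1) / 2 ^ (m + 1)) - f a|
          ≤ |f (a + (2 * j + 1) / 2 ^ (m + 1)) - f (a + j / 2 ^ m)| + |f (a + j / 2 ^ m) - f a| :=
            abs_sub_le _ _ _
        _ ≤ r ^ (m + 1) * b + (∑ j ∈ Finset.range (m + 1), r ^ j) * b :=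
            add_le_add hstep (ih j (by omega))
        _ = (∑ j ∈ Finset.range (m + 2), r ^ j) * b := by
            rw [Finset.sum_range_succ _ (m + 1)]; ring

lemma abs_sub_le_div_one_sub_of_dyadic (hb : 0 ≤ b) (hr : 0 ≤ r) (hr1 : r < 1)
    (hf : ContinuousOn f (Icc a (a + 1)))
    (h : ∀ m k : ℕ, k < 2 ^ m → |f (a + (k + 1) / 2 ^ m) - f (a + k / 2 ^ m)| ≤ r ^ m * b)
    {x : ℝ} (hx : x ∈ Icc a (a + 1)) :
    |f x - f a| ≤ b / (1 - r) := by
  set y : ℕ → ℝ := fun m => a + ⌊(x - a) * 2 ^ m⌋₊ / 2 ^ m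
  have hxa : 0 ≤ x - a := by linarith [hx.1]
  have hfloor (m : ℕ) : ⌊(x - a) * 2 ^ m⌋₊ ≤ 2 ^ m :=
    Nat.floor_le_of_le (by push_cast; nlinarith [hx.2, pow_pos (two_pos (α := ℝ)) m])
  have hy_mem (m : ℕ) : y m ∈ Icc a (a + 1) := by
    refine ⟨le_add_of_nonneg_right (by positivity), add_le_add_right ?_ a⟩
    rw [div_le_one (by positivity)]
    exact_mod_cast hfloor m
  have hy_lim : Tendsto y atTop (𝓝 x) := by
    have := (tendsto_nat_floor_mul_div_atTop hxa).comp
      (tendsto_pow_atTop_atTop_of_one_lt one_lt_two)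
    simpa using this.const_add a
  have hbound (m : ℕ) : |f (y m) - f a| ≤ b / (1 - r) := by
    refine (abs_sub_le_geom_sum_of_dyadic hb hr h m _ (hfloor m)).trans ?_
    rw [div_eq_mul_inv, mul_comm b, ← one_div]
    gcongr
    simpa using geom_sum_Ico_le_of_lt_one (m := 0) (n := m + 1) hr hr1
  have hfy : Tendsto (fun m => f (y m)) atTop (𝓝 (f x)) :=
    (hf x hx).tendsto.comp (tendsto_nhdsWithin_iff.2 ⟨hy_lim, Eventually.of_forall hy_mem⟩)
  exact le_of_tendsto ((hfy.sub_const _).abs) (Eventually.of_forall hbound)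

end Chaining

lemma exists_forall_abs_le_mul_of_forall_ge {f g : ℝ → ℝ} {T K : ℝ}
    (hf : ContinuousOn f (Icc 0 T)) (hg : ∀ u, 0 ≤ u → 1 ≤ g u)
    (hfar : ∀ u, T ≤ u → |f u| ≤ K * g u) :
    ∃ C, ∀ u, 0 ≤ u → |f u| ≤ C * g u := by
  obtain ⟨B, hB⟩ := isCompact_Icc.exists_bound_of_continuousOn hf
  refine ⟨max K |B|, fun u hu => ?_⟩
  have hg1 := hg u hu
  rcases le_total u T with huT | hTu
  · calc |f u| ≤ |B| := (hB u ⟨hu, huT⟩).trans (le_abs_self B)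
      _ ≤ max K |B| * 1 := by simp
      _ ≤ max K |B| * g u := by gcongr
  · exact (hfar u hTu).trans (by gcongr; exact le_max_left _ _)

lemma pow_add_two_div_rpow_le {x δ : ℝ} {p : ℕ} (hx : 1 ≤ x) (hpδ : 1 ≤ p * δ) :
    (x ^ p + 2) / (x ^ (1 / 2 + δ)) ^ (2 * p) ≤ 3 / x ^ 2 := by
  have hx0 : 0 < x := by linarith
  have hxp : 1 ≤ x ^ p := one_le_pow₀ hx
  have hden : x ^ p * x ^ 2 ≤ (x ^ (1 / 2 + δ)) ^ (2 * p) := by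
    rw [← Real.rpow_mul_natCast hx0.le, show (1 / 2 + δ) * ((2 * p : ℕ) : ℝ) = p + 2 * (p * δ) by
      push_cast; ring, Real.rpow_add hx0, Real.rpow_natCast]
    gcongr
    calc x ^ 2 = x ^ (2 : ℝ) := (Real.rpow_two x).symm
      _ ≤ x ^ (2 * (p * δ)) := Real.rpow_le_rpow_of_exponent_le hx (by linarith)
  rw [div_le_div_iff₀ (by positivity) (by positivity)]
  nlinarith [pow_pos hx0 2]

lemma two_pow_mul_div_le_inv_two_pow_div {p : ℕ} (hp : 4 ≤ p) {r c : ℝ} (hr : 0 < r)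
    (hr4 : 2⁻¹ ≤ r ^ 4) (hc : 0 < c) (m : ℕ) :
    2 ^ m * ((2⁻¹ ^ m) ^ p / (r ^ m * c) ^ (2 * p)) ≤ 2⁻¹ ^ m / c ^ (2 * p) := by
  have hρ : (2⁻¹ : ℝ) ^ (p - 2) ≤ r ^ (2 * p) := by
    refine le_of_pow_le_pow_left₀ two_ne_zero (by positivity) ?_
    calc ((2⁻¹ : ℝ) ^ (p - 2)) ^ 2 = 2⁻¹ ^ (2 * p - 4) := by rw [← pow_mul]; congr 1; omega
      _ ≤ 2⁻¹ ^ p := pow_le_pow_of_le_one (by norm_num) (by norm_num) (by omega)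
      _ ≤ (r ^ 4) ^ p := pow_le_pow_left₀ (by norm_num) hr4 p
      _ = (r ^ (2 * p)) ^ 2 := by ring
  have hsplit : (2⁻¹ : ℝ) ^ p = 2⁻¹ ^ (p - 2) * 4⁻¹ := by
    rw [show (4⁻¹ : ℝ) = 2⁻¹ ^ 2 by norm_num, ← pow_add]; congr 1; omega
  calc 2 ^ m * ((2⁻¹ ^ m) ^ p / (r ^ m * c) ^ (2 * p))
      = 2 ^ m * (2⁻¹ ^ p) ^ m / ((r ^ (2 * p)) ^ m * c ^ (2 * p)) := by ring
    _ ≤ 2 ^ m * (2⁻¹ ^ p) ^ m / ((2⁻¹ ^ (p - 2)) ^ m * c ^ (2 * p)) := by gcongr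
    _ = 2⁻¹ ^ m / c ^ (2 * p) := by
        rw [hsplit, mul_pow]
        field_simp
        rw [← mul_pow]; norm_num

def largeDyadicIncrements {Ω : Type*} (W : ℝ → Ω → ℝ) (r a c : ℝ) : Set Ω :=
  {ω | c ≤ |W a ω - W 0 ω|} ∪
    ⋃ m : ℕ, ⋃ k ∈ Finset.range (2 ^ m),
      {ω | r ^ m * c ≤ |W (a + (k + 1) / 2 ^ m) ω - W (a + k / 2 ^ m) ω|}

lemma abs_sub_le_of_notMem_largeDyadicIncrements {Ω : Type*} {W : ℝ → Ω → ℝ} {ω : Ω}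
    {r a c : ℝ} (hr : 0 ≤ r) (hr1 : r < 1) (hc : 0 ≤ c)
    (hω : ω ∉ largeDyadicIncrements W r a c) (hcont : ContinuousOn (W · ω) (Icc a (a + 1)))
    {u : ℝ} (hu : u ∈ Icc a (a + 1)) :
    |W u ω - W 0 ω| ≤ c / (1 - r) + c := by
  simp only [largeDyadicIncrements, mem_union, mem_iUnion, mem_ofPred_eq, Finset.mem_range,
    not_or, not_exists, not_le] at hω
  calc |W u ω - W 0 ω| ≤ |W u ω - W a ω| + |W a ω - W 0 ω| := abs_sub_le _ _ _
    _ ≤ c / (1 - r) + c :=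
        add_le_add (abs_sub_le_div_one_sub_of_dyadic hc hr hr1 hcont
          (fun m k hk => (hω.2 m k hk).le) hu) hω.1.le

namespace IsStdBM

variable {Ω : Type*} [MeasureSpace Ω] {W : ℝ → Ω → ℝ}

lemma hasLaw_sub (hW : IsStdBM W) {s t : ℝ} (hs : 0 ≤ s) (hst : s ≤ t) :
    HasLaw (fun ω => W t ω - W s ω) (gaussianReal 0 (t - s).toNNReal) where
  aemeasurable := ((hW.1 t).sub (hW.1 s)).aemeasurable
  map_eq := by
    have h := hW.2.2 2 ![1, -1] ![t, s] (by simp [Fin.forall_fin_two, hs, hs.trans hst])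
    simp only [Fin.sum_univ_two, Matrix.cons_val_zero, Matrix.cons_val_one, min_self,
      min_eq_right hst, min_eq_left hst] at h
    convert h using 3
    · ring
    · ring

lemma meas_abs_sub_ge_le (hW : IsStdBM W) (p : ℕ) {s t a : ℝ} (hs : 0 ≤ s) (hst : s ≤ t)
    (ha : 0 < a) :
    volume {ω | a ≤ |W t ω - W s ω|}
      ≤ stdGaussianMoment p * ENNReal.ofReal ((t - s) ^ p / a ^ (2 * p)) := by
  simpa [Real.coe_toNNReal _ (sub_nonneg.2 hst)] using
    (hW.hasLaw_sub hs hst).meas_abs_ge_le_of_gaussianReal p ha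

lemma measure_largeDyadicIncrements_le (hW : IsStdBM W) {p : ℕ} (hp : 4 ≤ p) {r a c : ℝ}
    (hr : 0 < r) (hr4 : 2⁻¹ ≤ r ^ 4) (ha : 0 ≤ a) (hc : 0 < c) :
    volume (largeDyadicIncrements W r a c)
      ≤ stdGaussianMoment p * ENNReal.ofReal ((a ^ p + 2) / c ^ (2 * p)) := by
  set M := stdGaussianMoment p
  have hstart : volume {ω | c ≤ |W a ω - W 0 ω|} ≤ M * ENNReal.ofReal (a ^ p / c ^ (2 * p)) := by
    simpa using hW.meas_abs_sub_ge_le p le_rfl ha hc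
  have hlevel (m : ℕ) : volume (⋃ k ∈ Finset.range (2 ^ m),
      {ω | r ^ m * c ≤ |W (a + (k + 1) / 2 ^ m) ω - W (a + k / 2 ^ m) ω|})
        ≤ M * ENNReal.ofReal (2⁻¹ ^ m / c ^ (2 * p)) := by
    refine (measure_biUnion_finset_le _ _).trans ?_
    have hk (k : ℕ) : volume {ω | r ^ m * c ≤ |W (a + (k + 1) / 2 ^ m) ω - W (a + k / 2 ^ m) ω|}
        ≤ M * ENNReal.ofReal ((2⁻¹ ^ m) ^ p / (r ^ m * c) ^ (2 * p)) := by
      have hlen : a + (k + 1) / 2 ^ m - (a + k / 2 ^ m) = (2⁻¹ : ℝ) ^ m := by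
        rw [inv_pow]; field_simp; ring
      have hst : a + k / 2 ^ m ≤ a + (k + 1) / 2 ^ m := by
        rw [← sub_nonneg, hlen]; positivity
      simpa only [hlen] using hW.meas_abs_sub_ge_le p (by positivity) hst (by positivity)
    refine (Finset.sum_le_sum fun k _ => hk k).trans ?_
    rw [Finset.sum_const, Finset.card_range, nsmul_eq_mul, mul_left_comm,
      ← ENNReal.ofReal_natCast, ← ENNReal.ofReal_mul (by positivity)]
    gcongr
    exact_mod_cast two_pow_mul_div_le_inv_two_pow_div hp hr hr4 hc m
  have hsum : ∑' m : ℕ, M * ENNReal.ofReal (2⁻¹ ^ m / c ^ (2 * p))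
      = M * ENNReal.ofReal (2 / c ^ (2 * p)) := by
    have hgeom : HasSum (fun m : ℕ => (2⁻¹ : ℝ) ^ m / c ^ (2 * p)) (2 / c ^ (2 * p)) := by
      simpa [one_div] using hasSum_geometric_two.div_const (c ^ (2 * p))
    rw [ENNReal.tsum_mul_left, ← ENNReal.ofReal_tsum_of_nonneg (fun _ => by positivity)
      hgeom.summable, hgeom.tsum_eq]
  calc volume (largeDyadicIncrements W r a c)
      ≤ M * ENNReal.ofReal (a ^ p / c ^ (2 * p)) + M * ENNReal.ofReal (2 / c ^ (2 * p)) :=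
        (measure_union_le _ _).trans <| add_le_add hstart <|
          (measure_iUnion_le _).trans <| (ENNReal.tsum_le_tsum hlevel).trans hsum.le
    _ = M * ENNReal.ofReal ((a ^ p + 2) / c ^ (2 * p)) := by
        rw [← mul_add, ← ENNReal.ofReal_add (by positivity) (by positivity), add_div]

lemma ae_eventually_notMem_largeDyadicIncrements (hW : IsStdBM W) {δ : ℝ} (hδ : 0 < δ) :
    ∀ᵐ ω, ∀ᶠ n : ℕ in atTop,
      ω ∉ largeDyadicIncrements W (9 / 10) (n + 1) (((n : ℝ) + 1) ^ (1 / 2 + δ)) := by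
  obtain ⟨p, hp4, hpδ⟩ : ∃ p : ℕ, 4 ≤ p ∧ 1 ≤ p * δ :=
    ⟨max 4 ⌈δ⁻¹⌉₊, le_max_left _ _, by
      rw [← div_le_iff₀ hδ, one_div]
      exact (Nat.le_ceil _).trans (by exact_mod_cast le_max_right _ _)⟩
  have hE (n : ℕ) :
      volume (largeDyadicIncrements W (9 / 10) (n + 1) (((n : ℝ) + 1) ^ (1 / 2 + δ)))
        ≤ stdGaussianMoment p * ENNReal.ofReal (3 / ((n : ℝ) + 1) ^ 2) :=
    (hW.measure_largeDyadicIncrements_le hp4 (by norm_num) (by norm_num) (by positivity)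
      (by positivity)).trans <|
      mul_le_mul_right (ENNReal.ofReal_le_ofReal <| pow_add_two_div_rpow_le
        (by linarith [(n.cast_nonneg : (0 : ℝ) ≤ n)]) hpδ) _
  have hsummable : Summable fun n : ℕ => 3 / ((n : ℝ) + 1) ^ 2 := by
    simpa [div_eq_mul_inv] using
      ((summable_nat_add_iff 1).2 (Real.summable_nat_pow_inv.2 one_lt_two)).mul_left 3
  refine ae_eventually_notMem (ne_top_of_le_ne_top ?_ (ENNReal.tsum_le_tsum hE))
  rw [ENNReal.tsum_mul_left, ← ENNReal.ofReal_tsum_of_nonneg (fun _ => by positivity) hsummable]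
  exact ENNReal.mul_ne_top (stdGaussianMoment_ne_top p) ENNReal.ofReal_ne_top

theorem ae_exists_abs_le_mul_rpow (hW : IsStdBM W) {δ : ℝ} (hδ : 0 < δ) :
    ∀ᵐ ω, ∃ C, ∀ u, 0 ≤ u → |W u ω| ≤ C * (1 + u) ^ (1 / 2 + δ) := by
  filter_upwards [hW.2.1, hW.ae_eventually_notMem_largeDyadicIncrements hδ] with ω hcont hnotMem
  obtain ⟨N, hN⟩ := eventually_atTop.1 hnotMem
  have hfar (u : ℝ) (hu : N + 1 ≤ u) : |W u ω| ≤ (|W 0 ω| + 11) * (1 + u) ^ (1 / 2 + δ) := by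
    have hu1 : 0 ≤ u - 1 := by linarith [(N.cast_nonneg : (0 : ℝ) ≤ N)]
    set n := ⌊u - 1⌋₊
    have hun : u ∈ Icc ((n : ℝ) + 1) (n + 1 + 1) :=
      ⟨by linarith [Nat.floor_le hu1], by linarith [Nat.lt_floor_add_one (u - 1)]⟩
    have hcn : ((n : ℝ) + 1) ^ (1 / 2 + δ) ≤ (1 + u) ^ (1 / 2 + δ) :=
      Real.rpow_le_rpow (by positivity) (by linarith [hun.1]) (by positivity)
    have hincr := abs_sub_le_of_notMem_largeDyadicIncrements (by norm_num) (by norm_num)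
      (by positivity) (hN n (Nat.le_floor (by linarith))) (hcont.mono fun x hx => by
        simp only [mem_Ici]; linarith [hx.1, (n.cast_nonneg : (0 : ℝ) ≤ n)]) hun
    have hone : 1 ≤ (1 + u) ^ (1 / 2 + δ) := Real.one_le_rpow (by linarith) (by positivity)
    calc |W u ω| ≤ |W 0 ω| + |W u ω - W 0 ω| := by
          simpa using abs_add_le (W 0 ω) (W u ω - W 0 ω)
      _ ≤ |W 0 ω| * (1 + u) ^ (1 / 2 + δ) + 11 * (1 + u) ^ (1 / 2 + δ) := by
          gcongr
          · exact le_mul_of_one_le_right (abs_nonneg _) hone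
          · norm_num at hincr; linarith
      _ = (|W 0 ω| + 11) * (1 + u) ^ (1 / 2 + δ) := by ring
  exact exists_forall_abs_le_mul_of_forall_ge (hcont.mono Icc_subset_Ici_self)
    (fun u hu => Real.one_le_rpow (by linarith) (by positivity)) hfar

end IsStdBM

theorem IsClosed.uniformContinuousOn_of_tendsto_cocompact {α β : Type*} [UniformSpace α]
    [UniformSpace β] {s : Set α} {f : α → β} {y : β} (hs : IsClosed s) (hf : ContinuousOn f s)
    (hy : Tendsto f (cocompact α ⊓ 𝓟 s) (𝓝 y)) : UniformContinuousOn f s := by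
  rw [uniformContinuousOn_iff_restrict]
  refine (continuousOn_iff_continuous_domRestrict.1 hf).uniformContinuous_of_tendsto_cocompact
    (hy.comp ?_)
  exact tendsto_inf.2 ⟨hs.isClosedEmbedding_subtypeVal.tendsto_cocompact,
    tendsto_principal.2 (Eventually.of_forall Subtype.property)⟩

/-- The paper's `R_η(s, t)` along a path `f` of `W₁`, with `b` in place of `W₂(1)`. -/
def rEta (η b : ℝ) (f : ℝ → ℝ) (p : ℝ × ℝ) : ℝ :=
  p.2 ^ (-(3 : ℝ) / 2 - η) * |(p.2 - p.1) * b + p.2 * f (p.1 - 1) - p.1 * f (p.2 - 1)|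

section rEta

variable {η b C e : ℝ} {f : ℝ → ℝ}

lemma rEta_nonneg {p : ℝ × ℝ} (hp : p ∈ {p : ℝ × ℝ | 1 ≤ p.1 ∧ p.1 ≤ p.2}) :
    0 ≤ rEta η b f p :=
  mul_nonneg (Real.rpow_nonneg (by linarith [hp.1, hp.2]) _) (abs_nonneg _)

lemma rEta_le_mul_rpow (hf : ∀ u, 0 ≤ u → |f u| ≤ C * (1 + u) ^ e) (he : 0 ≤ e) {p : ℝ × ℝ}
    (hp : p ∈ {p : ℝ × ℝ | 1 ≤ p.1 ∧ p.1 ≤ p.2}) :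
    rEta η b f p ≤ (|b| + 2 * C) * p.2 ^ (-(1 / 2 + η - e)) := by
  obtain ⟨s, t⟩ := p
  obtain ⟨hs, hst⟩ := hp
  dsimp only at hs hst ⊢
  have ht : 0 < t := by linarith
  have hC : 0 ≤ C := by simpa using (abs_nonneg _).trans (hf 0 le_rfl)
  have hte : 1 ≤ t ^ e := Real.one_le_rpow (by linarith) he
  have hfs : |f (s - 1)| ≤ C * t ^ e := by
    refine (hf (s - 1) (by linarith)).trans ?_
    rw [add_sub_cancel]
    gcongr
  have hft : |f (t - 1)| ≤ C * t ^ e := by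
    simpa using hf (t - 1) (by linarith)
  have hbracket : |(t - s) * b + t * f (s - 1) - s * f (t - 1)| ≤ (|b| + 2 * C) * (t * t ^ e) :=
    calc |(t - s) * b + t * f (s - 1) - s * f (t - 1)|
        ≤ (t - s) * |b| + t * |f (s - 1)| + s * |f (t - 1)| := by
          refine (abs_sub _ _).trans (add_le_add (abs_add_le _ _) le_rfl) |>.trans_eq ?_
          rw [abs_mul, abs_mul, abs_mul, abs_of_nonneg (by linarith : 0 ≤ t - s),
            abs_of_pos ht, abs_of_nonneg (by linarith : 0 ≤ s)]
      _ ≤ t * t ^ e * |b| + t * (C * t ^ e) + t * (C * t ^ e) := by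
          gcongr
          nlinarith [abs_nonneg b]
      _ = (|b| + 2 * C) * (t * t ^ e) := by ring
  calc rEta η b f (s, t) ≤ t ^ (-(3 : ℝ) / 2 - η) * ((|b| + 2 * C) * (t * t ^ e)) :=
        mul_le_mul_of_nonneg_left hbracket (by positivity)
    _ = (|b| + 2 * C) * t ^ (-(1 / 2 + η - e)) := by
        rw [mul_left_comm, ← Real.rpow_one_add' ht.le (by positivity), ← Real.rpow_add ht]
        ring_nf

lemma continuousOn_rEta (hf : ContinuousOn f (Ici 0)) :
    ContinuousOn (rEta η b f) {p : ℝ × ℝ | 1 ≤ p.1 ∧ p.1 ≤ p.2} := by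
  have hf₁ : ContinuousOn (fun p : ℝ × ℝ => f (p.1 - 1)) {p | 1 ≤ p.1 ∧ p.1 ≤ p.2} :=
    hf.comp (by fun_prop) fun p hp => by simpa using hp.1
  have hf₂ : ContinuousOn (fun p : ℝ × ℝ => f (p.2 - 1)) {p | 1 ≤ p.1 ∧ p.1 ≤ p.2} :=
    hf.comp (by fun_prop) fun p hp => by simpa using hp.1.trans hp.2
  refine ContinuousOn.mul (fun p hp => ?_) ((((by fun_prop : Continuous fun p : ℝ × ℝ =>
    (p.2 - p.1) * b).continuousOn.add (continuous_snd.continuousOn.mul hf₁)).sub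
      (continuous_fst.continuousOn.mul hf₂)).abs)
  exact (Real.continuousAt_rpow_const _ _ (Or.inl (by linarith [hp.1, hp.2]))).comp
    continuous_snd.continuousAt |>.continuousWithinAt

lemma tendsto_rEta (hf : ∀ u, 0 ≤ u → |f u| ≤ C * (1 + u) ^ e) (he : 0 ≤ e)
    (heη : e < 1 / 2 + η) :
    Tendsto (rEta η b f) (cocompact (ℝ × ℝ) ⊓ 𝓟 {p | 1 ≤ p.1 ∧ p.1 ≤ p.2}) (𝓝 0) := by
  have hnorm : ∀ᶠ p : ℝ × ℝ in 𝓟 {p | 1 ≤ p.1 ∧ p.1 ≤ p.2}, ‖p‖ = p.2 :=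
    eventually_principal.2 fun p hp => by
      rw [Prod.norm_def, Real.norm_eq_abs, Real.norm_eq_abs, abs_of_nonneg (by linarith [hp.1]),
        abs_of_nonneg (by linarith [hp.1, hp.2]), max_eq_right hp.2]
  have hdecay : Tendsto (fun p : ℝ × ℝ => (|b| + 2 * C) * ‖p‖ ^ (-(1 / 2 + η - e)))
      (cocompact (ℝ × ℝ)) (𝓝 0) := by
    simpa only [mul_zero, Function.comp_def] using
      ((tendsto_rpow_neg_atTop (y := 1 / 2 + η - e) (by linarith)).comp
        tendsto_norm_cocompact_atTop).const_mul (|b| + 2 * C)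
  refine squeeze_zero'
    (eventually_inf_principal.2 (Eventually.of_forall fun p hp => rEta_nonneg hp)) ?_
    (hdecay.mono_left inf_le_left)
  filter_upwards [inf_le_right (a := cocompact (ℝ × ℝ)) hnorm, eventually_inf_principal.2
    (Eventually.of_forall fun p hp => rEta_le_mul_rpow (η := η) (b := b) hf he hp)] with p hp hR
  rwa [hp]

lemma bddAbove_range_rEta (hf : ∀ u, 0 ≤ u → |f u| ≤ C * (1 + u) ^ e) (he : 0 ≤ e)
    (heη : e ≤ 1 / 2 + η) :
    BddAbove (range fun p : {p : ℝ × ℝ // 1 ≤ p.1 ∧ p.1 ≤ p.2} => rEta η b f p) := by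
  have hC : 0 ≤ C := by simpa using (abs_nonneg _).trans (hf 0 le_rfl)
  refine ⟨|b| + 2 * C, forall_mem_range.2 fun p => (rEta_le_mul_rpow hf he p.2).trans ?_⟩
  exact mul_le_of_le_one_right (by positivity)
    (Real.rpow_le_one_of_one_le_of_nonpos (p.2.1.trans p.2.2) (by linarith))

end rEta

theorem stmt9_general {Ω : Type*} [MeasureSpace Ω]
    (W₁ W₂ : ℝ → Ω → ℝ) (h₁ : IsStdBM W₁)
    (η : ℝ) (hη : 0 < η) :
    ∀ᵐ ω ∂(volume : Measure Ω),
      BddAbove (Set.range fun p : {p : ℝ × ℝ // 1 ≤ p.1 ∧ p.1 ≤ p.2} =>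
        (p : ℝ × ℝ).2 ^ (-(3 : ℝ) / 2 - η) *
          |((p : ℝ × ℝ).2 - (p : ℝ × ℝ).1) * W₂ 1 ω +
            (p : ℝ × ℝ).2 * W₁ ((p : ℝ × ℝ).1 - 1) ω -
            (p : ℝ × ℝ).1 * W₁ ((p : ℝ × ℝ).2 - 1) ω|) ∧
      UniformContinuousOn
        (fun p : ℝ × ℝ => p.2 ^ (-(3 : ℝ) / 2 - η) *
          |(p.2 - p.1) * W₂ 1 ω + p.2 * W₁ (p.1 - 1) ω - p.1 * W₁ (p.2 - 1) ω|)
        {p : ℝ × ℝ | 1 ≤ p.1 ∧ p.1 ≤ p.2} := by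
  filter_upwards [h₁.2.1, h₁.ae_exists_abs_le_mul_rpow (half_pos hη)] with ω hcont ⟨C, hC⟩
  have he : 0 ≤ 1 / 2 + η / 2 := by positivity
  have hA : IsClosed {p : ℝ × ℝ | 1 ≤ p.1 ∧ p.1 ≤ p.2} :=
    (isClosed_le continuous_const continuous_fst).inter (isClosed_le continuous_fst continuous_snd)
  show BddAbove (range fun p : {p : ℝ × ℝ // 1 ≤ p.1 ∧ p.1 ≤ p.2} =>
      rEta η (W₂ 1 ω) (W₁ · ω) p) ∧
    UniformContinuousOn (rEta η (W₂ 1 ω) (W₁ · ω)) {p : ℝ × ℝ | 1 ≤ p.1 ∧ p.1 ≤ p.2}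
  exact ⟨bddAbove_range_rEta hC he (by linarith),
    hA.uniformContinuousOn_of_tendsto_cocompact (continuousOn_rEta hcont)
      (tendsto_rEta hC he (by linarith))⟩

theorem stmt9 {Ω : Type*} [MeasureSpace Ω] [IsProbabilityMeasure (volume : Measure Ω)]
    (W₁ W₂ : ℝ → Ω → ℝ) (h₁ : IsStdBM W₁) (h₂ : IsStdBM W₂)
    (hind : IndepFun (fun ω t => W₁ t ω) (fun ω t => W₂ t ω) (volume : Measure Ω))
    (η : ℝ) (hη : 0 < η) :
    ∀ᵐ ω ∂(volume : Measure Ω),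
      BddAbove (Set.range fun p : {p : ℝ × ℝ // 1 ≤ p.1 ∧ p.1 ≤ p.2} =>
        (p : ℝ × ℝ).2 ^ (-(3 : ℝ) / 2 - η) *
          |((p : ℝ × ℝ).2 - (p : ℝ × ℝ).1) * W₂ 1 ω +
            (p : ℝ × ℝ).2 * W₁ ((p : ℝ × ℝ).1 - 1) ω -
            (p : ℝ × ℝ).1 * W₁ ((p : ℝ × ℝ).2 - 1) ω|) ∧
      UniformContinuousOn
        (fun p : ℝ × ℝ => p.2 ^ (-(3 : ℝ) / 2 - η) *
          |(p.2 - p.1) * W₂ 1 ω + p.2 * W₁ (p.1 - 1) ω - p.1 * W₁ (p.2 - 1) ω|)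
        {p : ℝ × ℝ | 1 ≤ p.1 ∧ p.1 ≤ p.2} :=
  stmt9_general W₁ W₂ h₁ η hη
end
end
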